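/- arXiv:1507.02340 — 2 statements merged into one kernel-verified Lean document; each statement's English description precedes it below -/
import Mathlib

section
/- Let $F(z) = \sum_{k\ge 0} \xi_k a_k z^k$ be an entire function, where $\xi_k \in \{\pm 1\}$ and $\sum_k |a_k| r^k < \infty$ for all $r > 0$. Define $\sigma_F(r)^2 = \sum_{k\ge 0} |a_k|^2 r^{2k}$, the maximal term $\mu_F(s) = \max_{k\ge 0} |a_k| s^k$, and the central index $\nu_F(s) = \max\{k : |a_k| s^k = \mu_F(s)\}$. Then for every $r \ge 1$ and $\tau > 0$, writing $\nu_- = \nu_F(r e^{-\tau})$ and $\nu_+ = \nu_F(r e^{\tau})$, one has for all $z$ with $|z| = r$: $\bigl| F(z) - \sum_{\nu_- \le k \le \nu_+} \xi_k a_k z^k \bigr| \le \frac{2\,\sigma_F(r)}{e^{\tau} - 1}$. -/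
open Complex

/-- The maximal term `μ_F(s) = max_k |a_k| s^k` of a Taylor series with coefficients `a`. -/
noncomputable def maxTerm (a : ℕ → ℂ) (s : ℝ) : ℝ := ⨆ k : ℕ, ‖a k‖ * s ^ k

/-- `σ_F(r) = (∑ |a_k|² r^{2k})^{1/2}`. -/
noncomputable def sigmaF (a : ℕ → ℂ) (r : ℝ) : ℝ :=
  Real.sqrt (∑' k : ℕ, ‖a k‖ ^ 2 * r ^ (2 * k))

/-
Outside the window `[ν₋, ν₊]` the terms `|aₖ| rᵏ` decay geometrically with ratio `e^{-τ}`: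
maximality of the term `ν₋` at radius `r e^{-τ}` gives `|aₖ| rᵏ ≤ |a_{ν₋}| r^{ν₋} e^{-τ(ν₋ - k)}`
for `k ≤ ν₋`, and symmetrically for `k ≥ ν₊` at radius `r e^{τ}`. A single term `|aₖ| rᵏ` is at
most the `ℓ²` norm `σ_F(r)`, so each of the two geometric tails is at most
`σ_F(r) e^{-τ} / (1 - e^{-τ}) = σ_F(r) / (e^τ - 1)`.
-/

open Finset

theorem Summable.sq {f : ℕ → ℝ} (hf : Summable f) : Summable fun k => f k ^ 2 := by
  refine .of_norm_bounded_eventually_nat hf.abs ?_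
  filter_upwards [(tendsto_norm_zero.comp hf.tendsto_atTop_zero).eventually_le_const one_pos]
    with k hk
  rw [norm_pow, pow_two, ← Real.norm_eq_abs]
  exact mul_le_of_le_one_left (norm_nonneg _) hk

section OrderedField

variable {K : Type*} [Field K] [LinearOrder K] [IsStrictOrderedRing K]

theorem le_mul_pow_sub_of_mul_pow_le {x y t : K} {k n : ℕ} (ht : 0 < t) (hk : k ≤ n)
    (h : x * t ^ k ≤ y * t ^ n) : x ≤ y * t ^ (n - k) := by
  rw [← Nat.sub_add_cancel hk, pow_add, ← mul_assoc] at h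
  exact le_of_mul_le_mul_right h (pow_pos ht k)

theorem le_mul_inv_pow_sub_of_mul_pow_le {x y t : K} {k n : ℕ} (ht : 0 < t) (hk : n ≤ k)
    (h : x * t ^ k ≤ y * t ^ n) : x ≤ y * t⁻¹ ^ (k - n) := by
  rw [← Nat.sub_add_cancel hk, pow_add, ← mul_assoc,
    mul_le_mul_iff_of_pos_right (pow_pos ht n)] at h
  rwa [inv_pow, le_mul_inv_iff₀ (pow_pos ht _)]

theorem sum_range_pow_sub_le {q : K} (hq₀ : 0 ≤ q) (hq₁ : q < 1) (m : ℕ) :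
    ∑ k ∈ range m, q ^ (m - k) ≤ q / (1 - q) :=
  calc ∑ k ∈ range m, q ^ (m - k) = q * ∑ j ∈ range m, q ^ j := by
        rw [mul_sum, ← sum_range_reflect]
        refine sum_congr rfl fun k hk => ?_
        rw [← pow_succ']
        have := mem_range.1 hk
        congr 1
        omega
    _ ≤ q * (1 / (1 - q)) := by
        gcongr
        simpa using geom_sum_Ico_le_of_lt_one (m := 0) (n := m) hq₀ hq₁
    _ = q / (1 - q) := by ring

end OrderedField

section Window

variable {E : Type*} [NormedAddCommGroup E] {g : ℕ → E}

theorem norm_tsum_sub_sum_Icc_le (hg : Summable g) (hg' : Summable fun k => ‖g k‖) (m n : ℕ) :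
    ‖∑' k, g k - ∑ k ∈ Icc m n, g k‖ ≤
      ∑ k ∈ range m, ‖g k‖ + ∑' j, ‖g (j + (n + 1))‖ := by
  have hIcc : Icc m n ⊆ range (n + 1) := by
    intro k; simp only [mem_Icc, mem_range]; omega
  have hhead : range (n + 1) \ Icc m n ⊆ range m := by
    intro k; simp only [Finset.mem_sdiff, mem_Icc, mem_range]; omega
  rw [← hg.sum_add_tsum_nat_add (n + 1), add_sub_right_comm, ← sum_sdiff_eq_sub hIcc]
  refine (norm_add_le _ _).trans (add_le_add ?_ (norm_tsum_le_tsum_norm ?_))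
  · exact (norm_sum_le _ _).trans
      (sum_le_sum_of_subset_of_nonneg hhead fun _ _ _ => norm_nonneg _)
  · exact (summable_nat_add_iff (n + 1)).2 hg'

theorem norm_tsum_sub_sum_Icc_le_of_geometric (hg : Summable g)
    (hg' : Summable fun k => ‖g k‖) {m n : ℕ} {M q : ℝ} (hM : 0 ≤ M) (hq₀ : 0 ≤ q) (hq₁ : q < 1)
    (hlow : ∀ k < m, ‖g k‖ ≤ M * q ^ (m - k)) (hhigh : ∀ k, n < k → ‖g k‖ ≤ M * q ^ (k - n)) :
    ‖∑' k, g k - ∑ k ∈ Icc m n, g k‖ ≤ 2 * M * q / (1 - q) := by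
  have hhead : ∑ k ∈ range m, ‖g k‖ ≤ M * (q / (1 - q)) := by
    refine (sum_le_sum fun k hk => hlow k (mem_range.1 hk)).trans ?_
    rw [← mul_sum]
    exact mul_le_mul_of_nonneg_left (sum_range_pow_sub_le hq₀ hq₁ m) hM
  have htail : ∑' j, ‖g (j + (n + 1))‖ ≤ M * q * (1 - q)⁻¹ := by
    have hle (j : ℕ) : ‖g (j + (n + 1))‖ ≤ M * q * q ^ j := by
      have := hhigh (j + (n + 1)) (by omega)
      rwa [show j + (n + 1) - n = j + 1 by omega, pow_succ', ← mul_assoc] at this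
    rw [← tsum_geometric_of_lt_one hq₀ hq₁, ← tsum_mul_left]
    exact ((summable_nat_add_iff (n + 1)).2 hg').tsum_le_tsum hle
      ((summable_geometric_of_lt_one hq₀ hq₁).mul_left _)
  calc _ ≤ _ := norm_tsum_sub_sum_Icc_le hg hg' m n
    _ ≤ M * (q / (1 - q)) + M * q * (1 - q)⁻¹ := add_le_add hhead htail
    _ = 2 * M * q / (1 - q) := by ring

end Window

section CentralIndex

variable {a : ℕ → ℂ}

theorem summable_norm_mul_pow_of_le {s s' : ℝ} (hs : 0 ≤ s) (h : s ≤ s')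
    (hs' : Summable fun k => ‖a k‖ * s' ^ k) : Summable fun k => ‖a k‖ * s ^ k :=
  hs'.of_nonneg_of_le (fun k => by positivity) fun k => by gcongr

theorem norm_mul_pow_le_maxTerm {s : ℝ} (hs : Summable fun k => ‖a k‖ * s ^ k) (k : ℕ) :
    ‖a k‖ * s ^ k ≤ maxTerm a s :=
  le_ciSup hs.tendsto_atTop_zero.bddAbove_range k

theorem norm_mul_pow_le_sigmaF {r : ℝ} (hr : Summable fun k => ‖a k‖ * r ^ k) (k : ℕ) :
    ‖a k‖ * r ^ k ≤ sigmaF a r := by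
  have hsq (j : ℕ) : (‖a j‖ * r ^ j) ^ 2 = ‖a j‖ ^ 2 * r ^ (2 * j) := by ring
  refine (le_abs_self _).trans (Real.abs_le_sqrt ?_)
  rw [hsq]
  exact (hr.sq.congr hsq).le_tsum k fun j _ => hsq j ▸ sq_nonneg _

theorem norm_mul_pow_mul_pow_le_of_centralIndex {r t : ℝ} {ν : ℕ}
    (hs : Summable fun k => ‖a k‖ * (r * t) ^ k) (hν : ‖a ν‖ * (r * t) ^ ν = maxTerm a (r * t))
    (k : ℕ) : ‖a k‖ * r ^ k * t ^ k ≤ ‖a ν‖ * r ^ ν * t ^ ν := by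
  simpa only [mul_pow, mul_assoc] using (norm_mul_pow_le_maxTerm hs k).trans_eq hν.symm

theorem norm_mul_pow_le_sigmaF_mul_pow_of_le_centralIndex {r t : ℝ} {ν k : ℕ}
    (hr : Summable fun k => ‖a k‖ * r ^ k) (hs : Summable fun k => ‖a k‖ * (r * t) ^ k)
    (hν : ‖a ν‖ * (r * t) ^ ν = maxTerm a (r * t)) (ht : 0 < t) (hk : k ≤ ν) :
    ‖a k‖ * r ^ k ≤ sigmaF a r * t ^ (ν - k) :=
  calc ‖a k‖ * r ^ k ≤ ‖a ν‖ * r ^ ν * t ^ (ν - k) :=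
        le_mul_pow_sub_of_mul_pow_le ht hk (norm_mul_pow_mul_pow_le_of_centralIndex hs hν k)
    _ ≤ sigmaF a r * t ^ (ν - k) := by gcongr; exact norm_mul_pow_le_sigmaF hr ν

theorem norm_mul_pow_le_sigmaF_mul_inv_pow_of_centralIndex_le {r t : ℝ} {ν k : ℕ}
    (hr : Summable fun k => ‖a k‖ * r ^ k) (hs : Summable fun k => ‖a k‖ * (r * t) ^ k)
    (hν : ‖a ν‖ * (r * t) ^ ν = maxTerm a (r * t)) (ht : 0 < t) (hk : ν ≤ k) :
    ‖a k‖ * r ^ k ≤ sigmaF a r * t⁻¹ ^ (k - ν) :=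
  calc ‖a k‖ * r ^ k ≤ ‖a ν‖ * r ^ ν * t⁻¹ ^ (k - ν) :=
        le_mul_inv_pow_sub_of_mul_pow_le ht hk (norm_mul_pow_mul_pow_le_of_centralIndex hs hν k)
    _ ≤ sigmaF a r * t⁻¹ ^ (k - ν) := by gcongr; exact norm_mul_pow_le_sigmaF hr ν

end CentralIndex

theorem Real.exp_neg_div_one_sub_exp_neg (τ : ℝ) :
    Real.exp (-τ) / (1 - Real.exp (-τ)) = 1 / (Real.exp τ - 1) := by
  rw [Real.exp_neg]
  field_simp

theorem central_terms_approximation_general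
    (ξ : ℕ → ℝ) (a : ℕ → ℂ) (F : ℂ → ℂ)
    (hξ : ∀ k, ξ k = 1 ∨ ξ k = -1)
    (hsum : ∀ r : ℝ, 0 < r → Summable (fun k : ℕ => ‖a k‖ * r ^ k))
    (hF : ∀ z : ℂ, HasSum (fun k : ℕ => (ξ k : ℂ) * a k * z ^ k) (F z))
    (r τ : ℝ) (hτ : 0 < τ) (νm νp : ℕ)
    (hνm : IsGreatest {k : ℕ |
      ‖a k‖ * (r * Real.exp (-τ)) ^ k = maxTerm a (r * Real.exp (-τ))} νm)
    (hνp : IsGreatest {k : ℕ |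
      ‖a k‖ * (r * Real.exp τ) ^ k = maxTerm a (r * Real.exp τ)} νp)
    (z : ℂ) (hz : ‖z‖ = r) :
    ‖F z - ∑ k ∈ Finset.Icc νm νp, (ξ k : ℂ) * a k * z ^ k‖ ≤
      2 * sigmaF a r / (Real.exp τ - 1) := by
  have hr : 0 ≤ r := hz ▸ norm_nonneg z
  have hsum₀ (s : ℝ) (hs : 0 ≤ s) : Summable fun k => ‖a k‖ * s ^ k :=
    summable_norm_mul_pow_of_le hs (lt_add_one s).le (hsum _ (by linarith))
  have hnorm (k : ℕ) : ‖(ξ k : ℂ) * a k * z ^ k‖ = ‖a k‖ * r ^ k := by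
    rcases hξ k with h | h <;> simp [h, hz]
  have hlow (k : ℕ) (hk : k < νm) :
      ‖(ξ k : ℂ) * a k * z ^ k‖ ≤ sigmaF a r * Real.exp (-τ) ^ (νm - k) :=
    (hnorm k).trans_le <| norm_mul_pow_le_sigmaF_mul_pow_of_le_centralIndex (hsum₀ r hr)
      (hsum₀ _ (by positivity)) hνm.1 (Real.exp_pos _) hk.le
  have hhigh (k : ℕ) (hk : νp < k) :
      ‖(ξ k : ℂ) * a k * z ^ k‖ ≤ sigmaF a r * Real.exp (-τ) ^ (k - νp) := by
    simpa only [hnorm, ← Real.exp_neg] using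
      norm_mul_pow_le_sigmaF_mul_inv_pow_of_centralIndex_le (hsum₀ r hr)
        (hsum₀ _ (by positivity)) hνp.1 (Real.exp_pos _) hk.le
  rw [← (hF z).tsum_eq]
  refine (norm_tsum_sub_sum_Icc_le_of_geometric (hF z).summable
    (by simpa only [hnorm] using hsum₀ r hr) (M := sigmaF a r) (Real.sqrt_nonneg _)
    (Real.exp_pos _).le (Real.exp_lt_one_iff.2 (neg_neg_of_pos hτ)) hlow hhigh).trans_eq ?_
  rw [mul_div_assoc, Real.exp_neg_div_one_sub_exp_neg, mul_one_div]

/-- Approximation of a Rademacher Taylor series by the central group of its terms: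
for `|z| = r ≥ 1` and `τ > 0`, with `νm, νp` the central indices at `r e^{-τ}` and `r e^{τ}`,
the tail outside `[νm, νp]` is bounded by `2 σ_F(r) / (e^τ - 1)`. -/
theorem central_terms_approximation
    (ξ : ℕ → ℝ) (a : ℕ → ℂ) (F : ℂ → ℂ)
    (hξ : ∀ k, ξ k = 1 ∨ ξ k = -1)
    (hsum : ∀ r : ℝ, 0 < r → Summable (fun k : ℕ => ‖a k‖ * r ^ k))
    (hF : ∀ z : ℂ, HasSum (fun k : ℕ => (ξ k : ℂ) * a k * z ^ k) (F z))
    (r τ : ℝ) (hr : 1 ≤ r) (hτ : 0 < τ) (νm νp : ℕ)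
    (hνm : IsGreatest {k : ℕ |
      ‖a k‖ * (r * Real.exp (-τ)) ^ k = maxTerm a (r * Real.exp (-τ))} νm)
    (hνp : IsGreatest {k : ℕ |
      ‖a k‖ * (r * Real.exp τ) ^ k = maxTerm a (r * Real.exp τ)} νp)
    (z : ℂ) (hz : ‖z‖ = r) :
    ‖F z - ∑ k ∈ Finset.Icc νm νp, (ξ k : ℂ) * a k * z ^ k‖ ≤
      2 * sigmaF a r / (Real.exp τ - 1) :=
  central_terms_approximation_general ξ a F hξ hsum hF r τ hτ νm νp hνm hνp z hz
end

section
/- Let $n : [0,\infty) \to [0,\infty)$ be nondecreasing, let $s : [0,\infty) \to [0,\infty)$ be nondecreasing, and let $X : [0,\infty) \to \mathbb{R}$ satisfy, for all $0 < R_1 < R_2$: $\int_{R_1}^{R_2} \frac{n(t)}{t}\,dt = \int_{R_1}^{R_2} \frac{s(t)}{t}\,dt + X(R_2) - X(R_1)$. Suppose $r_1 < r_1 e^{\delta} \le r \le r_2 e^{-\delta} < r_2$ for some $\delta > 0$. Then $|n(r) - s(r)| \le (s(r_2) - s(r_1)) + \frac{1}{\delta}\bigl(|X(r_1)| + |X(r_1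 e^{\delta})| + |X(r_2 e^{-\delta})| + |X(r_2)|\bigr)$. -/
open intervalIntegral

lemma interp_helper_bnd (f : ℝ → ℝ) (hf : MonotoneOn f (Set.Ici (0 : ℝ)))
    (c δ : ℝ) (hc : 0 < c) (hδ : 0 < δ) :
    δ * f c ≤ (∫ t in c..(c * Real.exp δ), f t / t) ∧
      (∫ t in c..(c * Real.exp δ), f t / t) ≤ δ * f (c * Real.exp δ) := by
  set d := c * Real.exp δ with hd
  have hexp : 1 < Real.exp δ := by
    have := Real.add_one_le_exp δ; nlinarith
  have hcd : c < d := by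
    rw [hd]; nlinarith
  have huicc : Set.uIcc c d = Set.Icc c d := Set.uIcc_of_le hcd.le
  have hsub : Set.uIcc c d ⊆ Set.Ici (0 : ℝ) := by
    rw [huicc]; intro t ht; exact le_trans hc.le ht.1
  have hpos : ∀ t ∈ Set.uIcc c d, (0 : ℝ) < t := by
    rw [huicc]; intro t ht; exact lt_of_lt_of_le hc ht.1
  have hcont : ContinuousOn (fun t : ℝ => 1 / t) (Set.uIcc c d) :=
    ContinuousOn.div continuousOn_const continuousOn_id
      (fun t ht => (hpos t ht).ne')
  have hfi : IntervalIntegrable f MeasureTheory.volume c d :=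
    (hf.mono hsub).intervalIntegrable
  have hfi' : IntervalIntegrable (fun t => f t / t) MeasureTheory.volume c d := by
    have := hfi.mul_continuousOn hcont
    simpa only [mul_one_div] using this
  have hci : IntervalIntegrable (fun t => f c / t) MeasureTheory.volume c d :=
    (ContinuousOn.div continuousOn_const continuousOn_id
      (fun t ht => (hpos t ht).ne')).intervalIntegrable
  have hdi : IntervalIntegrable (fun t => f d / t) MeasureTheory.volume c d :=
    (ContinuousOn.div continuousOn_const continuousOn_id
      (fun t ht => (hpos t ht).ne')).intervalIntegrable
  have hzero : (0:ℝ) ∉ Set.uIcc c d := fun h => absurd (hpos 0 h) (lt_irrefl 0)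
  have hlog : ∫ t in c..d, (1:ℝ) / t = δ := by
    rw [integral_one_div hzero, hd, mul_comm c (Real.exp δ), mul_div_assoc,
      div_self hc.ne', mul_one, Real.log_exp]
  have hmemf : ∀ t ∈ Set.Icc c d, t ∈ Set.Ici (0:ℝ) := fun t ht => le_trans hc.le ht.1
  have hconst : ∀ k : ℝ, ∫ t in c..d, k / t = δ * k := by
    intro k
    have : ∫ t in c..d, k / t = ∫ t in c..d, k * (1 / t) := by
      simp only [mul_one_div]
    rw [this, intervalIntegral.integral_const_mul, hlog, mul_comm]
  constructor
  · calc δ * f c = ∫ t in c..d, f c / t := (hconst (f c)).symm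
      _ ≤ ∫ t in c..d, f t / t := by
          apply intervalIntegral.integral_mono_on hcd.le hci hfi'
          intro t ht
          have htpos : 0 < t := lt_of_lt_of_le hc ht.1
          exact div_le_div_of_nonneg_right (hf (Set.mem_Ici.mpr hc.le) (hmemf t ht) ht.1) htpos.le
  · calc (∫ t in c..d, f t / t) ≤ ∫ t in c..d, f d / t := by
          apply intervalIntegral.integral_mono_on hcd.le hfi' hdi
          intro t ht
          have htpos : 0 < t := lt_of_lt_of_le hc ht.1
          exact div_le_div_of_nonneg_right (hf (hmemf t ht) (Set.mem_Ici.mpr (hc.trans hcd).le) ht.2) htpos.le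
      _ = δ * f d := hconst (f d)

/-- Deterministic interpolation inequality: if `∫_{R₁}^{R₂} n(t)/t dt
= ∫_{R₁}^{R₂} s(t)/t dt + X(R₂) - X(R₁)` for all `0 < R₁ < R₂`, with `n, s` nondecreasing
and nonnegative, then for `r₁ e^δ ≤ r ≤ r₂ e^{-δ}` one has the two-sided bound on
`|n(r) - s(r)|`. -/
theorem interpolation_inequality
    (n s : ℝ → ℝ) (X : ℝ → ℝ)
    (hn_mono : MonotoneOn n (Set.Ici (0 : ℝ))) (hn_nonneg : ∀ t : ℝ, 0 ≤ t → 0 ≤ n t)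
    (hs_mono : MonotoneOn s (Set.Ici (0 : ℝ))) (hs_nonneg : ∀ t : ℝ, 0 ≤ t → 0 ≤ s t)
    (hjensen : ∀ R₁ R₂ : ℝ, 0 < R₁ → R₁ < R₂ →
      ∫ t in R₁..R₂, n t / t = (∫ t in R₁..R₂, s t / t) + (X R₂ - X R₁))
    (δ r r₁ r₂ : ℝ) (hδ : 0 < δ) (hr₁ : 0 < r₁)
    (h₁ : r₁ * Real.exp δ ≤ r) (h₂ : r ≤ r₂ * Real.exp (-δ)) :
    |n r - s r| ≤ (s r₂ - s r₁) +
      (1 / δ) * (|X r₁| + |X (r₁ * Real.exp δ)| + |X (r₂ * Real.exp (-δ))| + |X r₂|) := by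
  set a := r₁
  set b := r₁ * Real.exp δ with hb
  set c := r₂ * Real.exp (-δ) with hcdef
  have hexp : 1 < Real.exp δ := by have := Real.add_one_le_exp δ; nlinarith
  have hab : a < b := by
    have := mul_lt_mul_of_pos_left hexp hr₁; simpa [hb] using this
  have hb0 : 0 < b := hr₁.trans hab
  have hr0 : 0 < r := hb0.trans_le h₁
  have hc0 : 0 < c := hr0.trans_le h₂
  have hcd : c * Real.exp δ = r₂ := by
    rw [hcdef, mul_assoc, ← Real.exp_add]; simp
  have hr₂0 : 0 < r₂ := by
    rw [← hcd]; positivity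
  have hcr₂ : c < r₂ := by
    rw [← hcd]; have := mul_lt_mul_of_pos_left hexp hc0; simpa using this
  -- bounds from helper
  obtain ⟨hn_low_ab, hn_up_ab⟩ := interp_helper_bnd n hn_mono a δ hr₁ hδ
  obtain ⟨hs_low_ab, hs_up_ab⟩ := interp_helper_bnd s hs_mono a δ hr₁ hδ
  obtain ⟨hn_low_cd, hn_up_cd⟩ := interp_helper_bnd n hn_mono c δ hc0 hδ
  obtain ⟨hs_low_cd, hs_up_cd⟩ := interp_helper_bnd s hs_mono c δ hc0 hδ
  rw [hcd] at hn_low_cd hn_up_cd hs_low_cd hs_up_cd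
  have hJab := hjensen a b hr₁ hab
  have hJcd := hjensen c r₂ hc0 hcr₂
  set K := (1 / δ) * (|X a| + |X b| + |X c| + |X r₂|) with hK
  have hδK : δ * K = |X a| + |X b| + |X c| + |X r₂| := by
    rw [hK]; field_simp
  have habs : ∀ x : ℝ, -|x| ≤ x ∧ x ≤ |x| := fun x => ⟨neg_abs_le x, le_abs_self x⟩
  have hXa := habs (X a); have hXb := habs (X b)
  have hXc := habs (X c); have hXd := habs (X r₂)
  -- n c ≤ s r₂ + K  (upper bound chain)
  have hup : δ * n c ≤ δ * (s r₂ + K) := by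
    have h4 : |X r₂| + |X c| ≤ δ * K := by
      rw [hδK]; linarith [abs_nonneg (X a), abs_nonneg (X b)]
    linarith [hn_low_cd, hs_up_cd, hJcd, hXc.1, hXd.2]
  have hncK : n c ≤ s r₂ + K := le_of_mul_le_mul_left hup hδ
  -- s a - K ≤ n b  (lower bound chain)
  have hlow : δ * (s a - K) ≤ δ * n b := by
    have h1 : δ * s a ≤ (∫ t in a..b, s t / t) := hs_low_ab
    have h2 : (∫ t in a..b, n t / t) ≤ δ * n b := hn_up_ab
    have h3 : (∫ t in a..b, n t / t) = (∫ t in a..b, s t / t) + (X b - X a) := hJab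
    have h4 : |X a| + |X b| ≤ δ * K := by
      rw [hδK]; linarith [abs_nonneg (X c), abs_nonneg (X r₂)]
    linarith [hXa.2, hXb.1]
  have hnbK : s a - K ≤ n b := le_of_mul_le_mul_left hlow hδ
  -- monotonicity
  have hnrb : n b ≤ n r := hn_mono (Set.mem_Ici.mpr hb0.le) (Set.mem_Ici.mpr hr0.le) h₁
  have hnrc : n r ≤ n c := hn_mono (Set.mem_Ici.mpr hr0.le) (Set.mem_Ici.mpr hc0.le) h₂
  have hsar : s a ≤ s r := hs_mono (Set.mem_Ici.mpr hr₁.le) (Set.mem_Ici.mpr hr0.le)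
    (hab.le.trans h₁)
  have hsrd : s r ≤ s r₂ := hs_mono (Set.mem_Ici.mpr hr0.le) (Set.mem_Ici.mpr hr₂0.le)
    (h₂.trans hcr₂.le)
  rw [abs_sub_le_iff]
  constructor
  · linarith
  · linarith
end
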